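/- arXiv:2106.03789 — 7 statements merged into one kernel-verified Lean document; each statement's English description precedes it below -/
import Mathlib

section
/- Let f ≥ 1 and let h_1 < h_2 < … < h_f be positive integers with multiplicities p_1,…,p_f ≥ 1 and t = p_1+…+p_f. Choose nonnegative integers l_j, r_j with p_j = l_j + r_j for each j, where l_j = 1 whenever j ≡ f (mod 2) and r_j = 1 whenever j ≡ f−1 (mod 2). Then the maximum of the continuant ⟨a_1,…,a_t⟩ over the set W_f(h̄,p̄) equals ⟨D_f(l̄,r̄)⟩, where D_f(l̄,r̄) is the sequence (h_f repeated l_f times, h_{f-1} repeated l_{f-1} times, …, h_1 repeated l_1 times, h_1 repeated r_1 times, h_2 repeated r_2 times, …, h_f repeated r_f times). -/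
/-
The continuant of `a₁, …, aₜ` is the `(0,0)` entry of `∏ !![aᵢ, 1; 1, 0]`, so the continuant of
`X ++ L ++ Y` is a bilinear form in the first row `u` of the matrix of `X` and the first column
`v` of the matrix of `Y`. Let `c` be a largest entry of `L` and let the left ratio `u 0 / u 1` be
at least the right ratio `v 0 / v 1`. If an arrangement does not start with `c`, reversing its
prefix `W` up to the last `c` moves `c` to the front without decreasing the value: by the
rearrangement inequality this only needs `K(W without its last entry) ≤ K(W without its first
entry)`, which holds because the first entry of `W` is smaller than `c`. Hence the greedy
arrangement, which places the entries in decreasing order, each at the end with the larger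
ratio, is optimal. `D_f(l̄, r̄)` is greedy: the first copy of each value goes to one end, the
other copies to the other end, and the parity conditions record how the ends alternate from
block to block.
-/

/-- The continuant of a finite sequence of positive integers. -/
def contnt : List ℕ → ℕ
  | [] => 1
  | [a] => a
  | a :: b :: l => a * contnt (b :: l) + contnt l

theorem List.exists_eq_append_cons_notMem {α : Type*} {c : α} {R : List α} (h : c ∈ R) :
    ∃ M B, R = M ++ c :: B ∧ c ∉ B := by
  induction R with
  | nil => simp at h
  | cons x R ih =>
    by_cases hR : c ∈ R
    · obtain ⟨M, B, rfl, hB⟩ := ih hR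
      exact ⟨x :: M, B, rfl, hB⟩
    · obtain rfl : c = x := by simpa [hR] using h
      exact ⟨[], R, rfl, hR⟩

namespace Continuant

open Matrix

def contMat (L : List ℕ) : Matrix (Fin 2) (Fin 2) ℕ := (L.map fun a => !![a, 1; 1, 0]).prod

@[simp] theorem contMat_nil : contMat [] = 1 := rfl

theorem contMat_cons (a : ℕ) (L : List ℕ) : contMat (a :: L) = !![a, 1; 1, 0] * contMat L := rfl

theorem contMat_append (A B : List ℕ) : contMat (A ++ B) = contMat A * contMat B := by
  simp [contMat]

theorem contMat_reverse (L : List ℕ) : contMat L.reverse = (contMat L)ᵀ := by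
  simp only [contMat, List.map_reverse, transpose_list_prod, List.map_map, Function.comp_def]
  congr 2
  exact List.map_congr_left fun a _ => by ext i j; fin_cases i <;> fin_cases j <;> rfl

@[simp] theorem contMat_cons_zero (a : ℕ) (L : List ℕ) (j : Fin 2) :
    contMat (a :: L) 0 j = a * contMat L 0 j + contMat L 1 j := by
  simp [contMat_cons, mul_apply, Fin.sum_univ_two]

@[simp] theorem contMat_cons_one (a : ℕ) (L : List ℕ) (j : Fin 2) :
    contMat (a :: L) 1 j = contMat L 0 j := by
  simp [contMat_cons, mul_apply, Fin.sum_univ_two]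

theorem contMat_concat_zero (L : List ℕ) (b : ℕ) (i : Fin 2) :
    contMat (L ++ [b]) i 0 = b * contMat L i 0 + contMat L i 1 := by
  simp [contMat_append, contMat_cons, mul_apply, Fin.sum_univ_two, mul_comm]

theorem contMat_concat_one (L : List ℕ) (b : ℕ) (i : Fin 2) :
    contMat (L ++ [b]) i 1 = contMat L i 0 := by
  simp [contMat_append, contMat_cons, mul_apply, Fin.sum_univ_two]

theorem contnt_eq_contMat (L : List ℕ) : contnt L = contMat L 0 0 := by
  induction L using contnt.induct with
  | case1 => rfl
  | case2 a => simp [contnt]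
  | case3 a b l ih₁ ih₂ => simp [contnt, ih₁, ih₂]

theorem contMat_cons_mulVec (a : ℕ) (L : List ℕ) (v : Fin 2 → ℕ) :
    contMat (a :: L) *ᵥ v =
      ![a * (contMat L *ᵥ v) 0 + (contMat L *ᵥ v) 1, (contMat L *ᵥ v) 0] := by
  rw [contMat_cons, ← mulVec_mulVec]
  ext i; fin_cases i <;> simp [mulVec, dotProduct]

theorem contMat_mulVec_one_le_zero {L : List ℕ} (hL : ∀ x ∈ L, 0 < x) {v : Fin 2 → ℕ}
    (hv : v 1 ≤ v 0) : (contMat L *ᵥ v) 1 ≤ (contMat L *ᵥ v) 0 := by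
  cases L with
  | nil => simpa using hv
  | cons a L =>
    have ha : 0 < a := hL a (by simp)
    rw [contMat_cons_mulVec]
    simp only [cons_val_zero, cons_val_one]
    nlinarith

theorem contMat_one_zero_le {L : List ℕ} (hL : ∀ x ∈ L, 0 < x) :
    contMat L 1 0 ≤ contMat L 0 0 := by
  simpa [mulVec, dotProduct, Fin.sum_univ_two] using
    contMat_mulVec_one_le_zero hL (v := ![1, 0]) (by simp)

theorem contMat_cons_le_concat {a c : ℕ} (hac : a < c) {L : List ℕ} (hL : ∀ x ∈ L, 0 < x) :
    contMat (a :: L) 0 0 ≤ contMat (L ++ [c]) 0 0 := by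
  have := contMat_one_zero_le hL
  rw [contMat_cons_zero, contMat_concat_zero]
  nlinarith

/-- If `u` is the first row of `contMat X` and `v` the first column of `contMat Y`, this is the
continuant of `X ++ L ++ Y`. -/
def contForm (u v : Fin 2 → ℕ) (L : List ℕ) : ℕ := u ⬝ᵥ (contMat L *ᵥ v)

theorem contForm_append (u v : Fin 2 → ℕ) (A B : List ℕ) :
    contForm u v (A ++ B) = contForm u (contMat B *ᵥ v) A := by
  rw [contForm, contForm, contMat_append, ← mulVec_mulVec]

theorem contForm_reverse (u v : Fin 2 → ℕ) (L : List ℕ) :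
    contForm u v L.reverse = contForm v u L := by
  rw [contForm, contForm, contMat_reverse, mulVec_transpose, dotProduct_comm, dotProduct_mulVec]

theorem contForm_cons (c : ℕ) (u v : Fin 2 → ℕ) (L : List ℕ) :
    contForm u v (c :: L) = contForm ![c * u 0 + u 1, u 0] v L := by
  simp only [contForm, dotProduct, mulVec, Fin.sum_univ_two, contMat_cons_zero, contMat_cons_one,
    cons_val_zero, cons_val_one]
  ring

theorem contForm_one_zero (L : List ℕ) : contForm ![1, 0] ![1, 0] L = contMat L 0 0 := by
  simp [contForm, dotProduct, mulVec, Fin.sum_univ_two]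

theorem contForm_le_swap {W : List ℕ} (hW : contMat W 0 1 ≤ contMat W 1 0) {u v : Fin 2 → ℕ}
    (huv : u 1 * v 0 ≤ u 0 * v 1) : contForm u v W ≤ contForm v u W := by
  have := mul_add_mul_le_mul_add_mul hW huv
  simp only [contForm, dotProduct, mulVec, Fin.sum_univ_two]
  nlinarith

theorem mul_contMat_mulVec_le {c : ℕ} {B : List ℕ} (hB : ∀ x ∈ B, 0 < x ∧ x < c)
    {u v : Fin 2 → ℕ} (hcu : c * u 1 ≤ u 0) (hv : v 1 ≤ v 0)
    (huv : u 1 * v 0 ≤ u 0 * v 1) :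
    u 1 * (contMat B *ᵥ v) 0 ≤ u 0 * (contMat B *ᵥ v) 1 := by
  cases B with
  | nil => simpa using huv
  | cons b B =>
    obtain ⟨-, hbc⟩ := hB b (by simp)
    have hw := contMat_mulVec_one_le_zero (L := B) (fun x hx => (hB x (by simp [hx])).1) hv
    set w := contMat B *ᵥ v
    rw [contMat_cons_mulVec]
    simp only [cons_val_zero, cons_val_one]
    calc u 1 * (b * w 0 + w 1) ≤ u 1 * (c * w 0) := by gcongr; nlinarith
      _ = c * u 1 * w 0 := by ring
      _ ≤ u 0 * w 0 := by gcongr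

theorem contForm_le_cons_of_forall_le {c : ℕ} {s T : List ℕ} {u v : Fin 2 → ℕ}
    (hc : 0 < c) (hs : ∀ x ∈ s, 0 < x ∧ x ≤ c)
    (hcu : c * u 1 ≤ u 0) (hcv : c * v 1 ≤ v 0) (huv : u 1 * v 0 ≤ u 0 * v 1)
    (hT : ∀ R, R.Perm s →
      contForm ![c * u 0 + u 1, u 0] v R ≤ contForm ![c * u 0 + u 1, u 0] v T)
    (R : List ℕ) (hR : R.Perm (c :: s)) : contForm u v R ≤ contForm u v (c :: T) := by
  rw [contForm_cons]
  obtain ⟨x, R, rfl⟩ : ∃ x R', R = x :: R' :=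
    List.exists_cons_of_ne_nil (by rintro rfl; simp at hR)
  by_cases hxc : x = c
  · subst hxc
    rw [contForm_cons]
    exact hT R hR.cons_inv
  have hRs : ∀ y ∈ x :: R, 0 < y ∧ y ≤ c := fun y hy => by
    rcases List.mem_cons.1 (hR.subset hy) with rfl | hy
    · exact ⟨hc, le_rfl⟩
    · exact hs y hy
  -- Split `R = x :: M ++ c :: B` at the last `c`; reversing `x :: M ++ [c]` puts `c` in front.
  obtain ⟨M, B, rfl, hcB⟩ := List.exists_eq_append_cons_notMem
    (show c ∈ R by simpa [Ne.symm hxc] using hR.symm.subset (List.mem_cons_self ..))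
  have hxlt : x < c := lt_of_le_of_ne (hRs x (by simp)).2 hxc
  have hM : ∀ y ∈ M, 0 < y := fun y hy => (hRs y (by simp [hy])).1
  have hB : ∀ y ∈ B, 0 < y ∧ y < c := fun y hy =>
    ⟨(hRs y (by simp [hy])).1,
      lt_of_le_of_ne (hRs y (by simp [hy])).2 (by rintro rfl; exact hcB hy)⟩
  have hW : contMat (x :: M ++ [c]) 0 1 ≤ contMat (x :: M ++ [c]) 1 0 := by
    rw [contMat_concat_one, List.cons_append, contMat_cons_one]
    exact contMat_cons_le_concat hxlt hM
  have hsplit : x :: (M ++ c :: B) = (x :: M ++ [c]) ++ B := by simp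
  have hrev : (x :: M ++ [c]).reverse ++ B = c :: (M.reverse ++ x :: B) := by simp
  have hperm : (M.reverse ++ x :: B).Perm s := by
    have h := ((List.reverse_perm (x :: M ++ [c])).append_right B).trans (hsplit ▸ hR)
    rw [hrev] at h
    exact h.cons_inv
  calc contForm u v (x :: (M ++ c :: B))
      = contForm u (contMat B *ᵥ v) (x :: M ++ [c]) := by rw [hsplit, contForm_append]
    _ ≤ contForm (contMat B *ᵥ v) u (x :: M ++ [c]) :=
        contForm_le_swap hW (mul_contMat_mulVec_le hB hcu
          (le_trans (Nat.le_mul_of_pos_left _ hc) hcv) huv)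
    _ = contForm u v (c :: (M.reverse ++ x :: B)) := by
        rw [← hrev, contForm_append u v _ B, contForm_reverse]
    _ ≤ _ := by rw [contForm_cons]; exact hT _ hperm

/-- `T` arises from `s` by placing the elements of `s` one at a time, each at the end whose
boundary ratio (`u 0 / u 1` on the left, `v 0 / v 1` on the right) is the larger. -/
inductive Greedy : List ℕ → (Fin 2 → ℕ) → (Fin 2 → ℕ) → List ℕ → Prop
  | nil (u v : Fin 2 → ℕ) : Greedy [] u v []
  | left {c : ℕ} {s T : List ℕ} {u v : Fin 2 → ℕ} :
      u 1 * v 0 ≤ u 0 * v 1 → Greedy s ![c * u 0 + u 1, u 0] v T →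
        Greedy (c :: s) u v (c :: T)
  | right {c : ℕ} {s T : List ℕ} {u v : Fin 2 → ℕ} :
      v 1 * u 0 ≤ v 0 * u 1 → Greedy s u ![c * v 0 + v 1, v 0] T →
        Greedy (c :: s) u v (T ++ [c])

namespace Greedy

variable {s T : List ℕ} {u v : Fin 2 → ℕ}

theorem perm (g : Greedy s u v T) : T.Perm s := by
  induction g with
  | nil => rfl
  | left _ _ ih => exact ih.cons _
  | right _ _ ih => exact List.perm_append_singleton _ _ |>.trans (ih.cons _)

theorem reverse (g : Greedy s u v T) : Greedy s v u T.reverse := by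
  induction g with
  | nil u v => exact nil v u
  | left h _ ih => simpa using right h ih
  | right h _ ih => simpa using left h ih

theorem contForm_le (g : Greedy s u v T) (hs : ∀ x ∈ s, 0 < x) (hsort : s.Pairwise (· ≥ ·))
    (hu : ∀ x ∈ s, x * u 1 ≤ u 0) (hv : ∀ x ∈ s, x * v 1 ≤ v 0)
    (R : List ℕ) (hR : R.Perm s) :
    contForm u v R ≤ contForm u v T := by
  induction s generalizing u v T R with
  | nil => cases g; rw [List.perm_nil.1 hR]
  | cons c s ih =>
    have hc : 0 < c := hs c (by simp)
    have hsc : ∀ x ∈ s, 0 < x ∧ x ≤ c := fun x hx =>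
      ⟨hs x (by simp [hx]), List.rel_of_pairwise_cons hsort hx⟩
    have hu' : ∀ x ∈ s, x * u 0 ≤ c * u 0 + u 1 := fun x hx =>
      le_add_right (Nat.mul_le_mul_right _ (hsc x hx).2)
    have hv' : ∀ x ∈ s, x * v 0 ≤ c * v 0 + v 1 := fun x hx =>
      le_add_right (Nat.mul_le_mul_right _ (hsc x hx).2)
    have ih' := fun {u v T} (g : Greedy s u v T) hu hv =>
      ih g (fun x hx => (hsc x hx).1) hsort.of_cons hu hv
    cases g with
    | left huv g =>
      exact contForm_le_cons_of_forall_le hc hsc (hu c (by simp)) (hv c (by simp)) huv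
        (ih' g hu' (fun x hx => hv x (by simp [hx]))) R hR
    | @right _ _ T _ _ hvu g =>
      calc contForm u v R = contForm v u R.reverse := by rw [contForm_reverse]
        _ ≤ contForm v u (c :: T.reverse) :=
          contForm_le_cons_of_forall_le hc hsc (hv c (by simp)) (hu c (by simp)) hvu
            (ih' g.reverse hv' (fun x hx => hu x (by simp [hx]))) _
            ((List.reverse_perm R).trans hR)
        _ = contForm u v (T ++ [c]) := by rw [← contForm_reverse]; simp

end Greedy

theorem exists_greedy_replicate_append {a : ℕ} {u w : Fin 2 → ℕ} (k : ℕ)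
    (hwu : w 1 * u 0 ≤ w 0 * u 1) (hnext : u 0 * w 0 ≤ u 1 * (a * w 0 + w 1))
    (ha : a * w 1 ≤ w 0) :
    ∃ w₁ : Fin 2 → ℕ, w₁ 1 * u 0 ≤ w₁ 0 * u 1 ∧ a * w₁ 1 ≤ w₁ 0 ∧
      ∀ {s T}, Greedy s u w₁ T →
        Greedy (List.replicate k a ++ s) u w (T ++ List.replicate k a) := by
  induction k generalizing w with
  | zero => exact ⟨w, hwu, ha, fun g => by simpa using g⟩
  | succ k ih =>
    obtain ⟨w₁, hw₁, haw₁, hg⟩ := ih (w := ![a * w 0 + w 1, w 0])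
      (by simpa [mul_comm] using hnext)
      (by simp only [cons_val_zero, cons_val_one]; nlinarith) (by simp)
    refine ⟨w₁, hw₁, haw₁, @fun s T g => ?_⟩
    have hT : T ++ List.replicate (k + 1) a = T ++ List.replicate k a ++ [a] := by
      simp [List.replicate_succ']
    rw [hT, List.replicate_succ, List.cons_append]
    exact Greedy.right hwu (hg g)

def zigzag : List (ℕ × ℕ) → List ℕ
  | [] => []
  | (a, m) :: bs => a :: ((zigzag bs).reverse ++ List.replicate (m - 1) a)

theorem greedy_zigzag {bs : List (ℕ × ℕ)} (hbs : bs.Pairwise fun x y => y.1 < x.1)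
    (hm : ∀ b ∈ bs, 0 < b.2) {u v : Fin 2 → ℕ}
    (huv : ∀ b ∈ bs.head?,
      u 1 * v 0 ≤ u 0 * v 1 ∧ (b.1 + 1) * u 1 ≤ u 0 ∧ (b.1 + 1) * v 1 ≤ v 0) :
    Greedy (bs.flatMap fun b => List.replicate b.2 b.1) u v (zigzag bs) := by
  induction bs generalizing u v with
  | nil => exact Greedy.nil u v
  | cons b bs ih =>
    obtain ⟨a, m⟩ := b
    obtain ⟨k, rfl⟩ : ∃ k, m = k + 1 := Nat.exists_eq_add_one.2 (hm (a, m) (by simp))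
    obtain ⟨huv, hu, hv⟩ := huv _ rfl
    dsimp only at hu hv
    obtain ⟨w₁, hw₁, haw₁, hg⟩ := exists_greedy_replicate_append (a := a)
      (u := ![a * u 0 + u 1, u 0]) k (w := v)
      (by
        have hu₁ : u 1 ≤ u 0 := le_trans (Nat.le_mul_of_pos_left _ a.succ_pos) hu
        simp only [cons_val_zero, cons_val_one]
        nlinarith [Nat.mul_le_mul_left (v 1) hu₁, Nat.mul_le_mul_right (u 0) hv])
      (by simp only [cons_val_zero, cons_val_one]; nlinarith) (by nlinarith)
    simp only [cons_val_zero, cons_val_one] at hw₁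
    have hrest := ih (List.Pairwise.of_cons hbs) (fun b hb => hm b (by simp [hb]))
      (u := w₁) (v := ![a * u 0 + u 1, u 0]) (by
        intro b hb
        have hba : b.1 < a := List.rel_of_pairwise_cons hbs (List.mem_of_mem_head? hb)
        simp only [cons_val_zero, cons_val_one]
        refine ⟨hw₁, by nlinarith, by nlinarith⟩)
    simpa [zigzag, List.replicate_succ] using Greedy.left huv (hg hrest.reverse)

theorem zigzag_map_finRange_reverse (f : ℕ) (h p l r : Fin f → ℕ)
    (hlr : ∀ j, p j = l j + r j)
    (hl : ∀ j : Fin f, (j.val + 1) % 2 = f % 2 → l j = 1)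
    (hr : ∀ j : Fin f, (j.val + 1) % 2 = (f - 1) % 2 → r j = 1) :
    zigzag ((List.finRange f).reverse.map fun j => (h j, p j)) =
      ((List.finRange f).reverse.flatMap fun j => List.replicate (l j) (h j)) ++
        ((List.finRange f).flatMap fun j => List.replicate (r j) (h j)) := by
  induction f with
  | zero => rfl
  | succ f ih =>
    have hl_last : l (Fin.last f) = 1 := hl _ (by simp)
    have hr_last : r (Fin.last f) = p (Fin.last f) - 1 := by have := hlr (Fin.last f); omega
    have IH := ih (fun j => h j.castSucc) (fun j => p j.castSucc) (fun j => r j.castSucc)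
      (fun j => l j.castSucc) (fun j => (hlr j.castSucc).trans (Nat.add_comm _ _))
      (fun j hj => hr j.castSucc (by simpa using hj))
      (fun j hj => hl j.castSucc (by have := j.pos; simp only [Fin.val_castSucc]; omega))
    rw [List.finRange_succ_last]
    simp only [List.reverse_append, List.reverse_singleton, List.singleton_append, List.map_cons,
      List.flatMap_cons, List.flatMap_append, List.flatMap_nil, List.append_nil,
      ← List.map_reverse, List.flatMap_map, List.map_map, hl_last, hr_last, List.replicate_one,
      zigzag]
    rw [Function.comp_def, IH]
    simp [List.reverse_flatMap, Function.comp_def]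

theorem pairwise_flatMap_replicate {bs : List (ℕ × ℕ)}
    (hbs : bs.Pairwise fun x y => y.1 < x.1) :
    (bs.flatMap fun b => List.replicate b.2 b.1).Pairwise (· ≥ ·) :=
  List.pairwise_flatMap.2 ⟨fun _ _ => List.pairwise_replicate.2 (Or.inr le_rfl),
    hbs.imp fun hxy _ hx _ hy => by
      rw [List.eq_of_mem_replicate hx, List.eq_of_mem_replicate hy]; exact hxy.le⟩

end Continuant

open Continuant in
theorem stmt_1_general (f : ℕ) (h p l r : Fin f → ℕ)
    (hmono : StrictMono h) (hpos : ∀ j, 0 < h j) (hp : ∀ j, 1 ≤ p j)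
    (hlr : ∀ j, p j = l j + r j)
    (hl : ∀ j : Fin f, (j.val + 1) % 2 = f % 2 → l j = 1)
    (hr : ∀ j : Fin f, (j.val + 1) % 2 = (f - 1) % 2 → r j = 1) :
    (((List.finRange f).reverse.flatMap fun j => List.replicate (l j) (h j)) ++
        ((List.finRange f).flatMap fun j => List.replicate (r j) (h j))).Perm
      ((List.finRange f).flatMap fun j => List.replicate (p j) (h j)) ∧
    ∀ a : List ℕ,
      a.Perm ((List.finRange f).flatMap fun j => List.replicate (p j) (h j)) →
      contnt a ≤
        contnt (((List.finRange f).reverse.flatMap fun j => List.replicate (l j) (h j)) ++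
          ((List.finRange f).flatMap fun j => List.replicate (r j) (h j))) := by
  set bs := (List.finRange f).reverse.map fun j => (h j, p j)
  have hbs : bs.Pairwise fun x y => y.1 < x.1 := by
    simpa [bs, List.pairwise_map, List.pairwise_reverse] using
      (List.pairwise_lt_finRange f).imp fun hij => hmono hij
  have hblocks : (bs.flatMap fun b => List.replicate b.2 b.1).Perm
      ((List.finRange f).flatMap fun j => List.replicate (p j) (h j)) := by
    simp only [bs, List.flatMap_map]
    exact (List.reverse_perm _).flatMap_right _
  have hg := greedy_zigzag hbs
    (fun b hb => by obtain ⟨j, -, rfl⟩ := List.mem_map.1 hb; exact hp j)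
    (u := ![1, 0]) (v := ![1, 0]) (by simp)
  rw [← zigzag_map_finRange_reverse f h p l r hlr hl hr]
  refine ⟨hg.perm.trans hblocks, fun a ha => ?_⟩
  have hblocks_pos : ∀ x ∈ bs.flatMap (fun b => List.replicate b.2 b.1), 0 < x := fun x hx => by
    obtain ⟨b, hb, hx⟩ := List.mem_flatMap.1 hx
    obtain ⟨j, -, rfl⟩ := List.mem_map.1 hb
    exact List.eq_of_mem_replicate hx ▸ hpos j
  have hopt := hg.contForm_le hblocks_pos (pairwise_flatMap_replicate hbs) (by simp) (by simp) a
    (ha.trans hblocks.symm)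
  rwa [contForm_one_zero, contForm_one_zero, ← contnt_eq_contMat, ← contnt_eq_contMat] at hopt

/-- Theorem 2: the maximum of the continuant over `W_f(h̄,p̄)` is
attained at the sequence `D_f(l̄,r̄)` = (h_f^{l_f},…,h_1^{l_1},h_1^{r_1},…,h_f^{r_f}),
where `p j = l j + r j`, `l j = 1` when the (1-based) index `j` is `≡ f (mod 2)`,
and `r j = 1` when it is `≡ f−1 (mod 2)`. -/
theorem stmt_1 (f : ℕ) (hf : 1 ≤ f) (h p l r : Fin f → ℕ)
    (hmono : StrictMono h) (hpos : ∀ j, 0 < h j) (hp : ∀ j, 1 ≤ p j)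
    (hlr : ∀ j, p j = l j + r j)
    (hl : ∀ j : Fin f, (j.val + 1) % 2 = f % 2 → l j = 1)
    (hr : ∀ j : Fin f, (j.val + 1) % 2 = (f - 1) % 2 → r j = 1) :
    (((List.finRange f).reverse.flatMap fun j => List.replicate (l j) (h j)) ++
        ((List.finRange f).flatMap fun j => List.replicate (r j) (h j))).Perm
      ((List.finRange f).flatMap fun j => List.replicate (p j) (h j)) ∧
    ∀ a : List ℕ,
      a.Perm ((List.finRange f).flatMap fun j => List.replicate (p j) (h j)) →
      contnt a ≤
        contnt (((List.finRange f).reverse.flatMap fun j => List.replicate (l j) (h j)) ++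
          ((List.finRange f).flatMap fun j => List.replicate (r j) (h j))) :=
  stmt_1_general f h p l r hmono hpos hp hlr hl hr
end

section
/- For positive integers n and S, the maximum of the continuant ⟨a_1,…,a_t⟩ over the set U_n(S) of all finite sequences with entries in {1,…,n} and sum of entries equal to S is attained at the all-ones sequence of length S; that is, ⟨a_1,…,a_t⟩ ≤ ⟨1,1,…,1⟩ (S ones) for every sequence in U_n(S), with equality for the all-ones sequence. -/
open Nat

lemma Nat.le_fib_succ (n : ℕ) : n ≤ fib (n + 1) := by
  rcases lt_or_ge n 2 with h | h
  · interval_cases n <;> simp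
  · exact (le_fib_add_one n).trans (fib_lt_fib_succ h)

lemma contnt_replicate_one (S : ℕ) : contnt (List.replicate S 1) = fib (S + 1) := by
  induction S using Nat.twoStepInduction with
  | zero => rfl
  | one => rfl
  | more S ih ih_succ =>
    rw [List.replicate_succ, List.replicate_succ, contnt, ← List.replicate_succ, ih_succ, ih,
      fib_add_two (n := S + 1), one_mul, add_comm]

lemma contnt_le_fib_sum_succ (l : List ℕ) (hl : ∀ y ∈ l, 0 < y) :
    contnt l ≤ fib (l.sum + 1) := by
  induction l using contnt.induct with
  | case1 => rfl
  | case2 a => exact le_fib_succ a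
  | case3 a b l ih_tail ih_tail_tail =>
    simp only [List.mem_cons, forall_eq_or_imp] at hl
    obtain ⟨ha, hb, hl⟩ := hl
    set s := (b :: l).sum with hs
    have hls : l.sum + 1 ≤ s := by simp only [hs, List.sum_cons]; omega
    have h_head : a * contnt (b :: l) ≤ fib (a + 1) * fib (s + 1) :=
      Nat.mul_le_mul (le_fib_succ a) (ih_tail (by simpa using ⟨hb, hl⟩))
    have h_tail : contnt l ≤ fib a * fib s :=
      calc contnt l ≤ fib (l.sum + 1) := ih_tail_tail hl
        _ ≤ fib s := fib_mono hls
        _ ≤ fib a * fib s := Nat.le_mul_of_pos_left _ (fib_pos.mpr ha)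
    calc contnt (a :: b :: l) = a * contnt (b :: l) + contnt l := rfl
      _ ≤ fib a * fib s + fib (a + 1) * fib (s + 1) := by omega
      _ = fib ((a :: b :: l).sum + 1) := by
        rw [← fib_add, List.sum_cons (a := a), add_comm a s]

theorem stmt_3_general (n S : ℕ) (hn : 0 < n) :
    ((∀ y ∈ List.replicate S 1, 1 ≤ y ∧ y ≤ n) ∧ (List.replicate S 1).sum = S) ∧
    ∀ a : List ℕ, (∀ y ∈ a, 1 ≤ y ∧ y ≤ n) → a.sum = S →
      contnt a ≤ contnt (List.replicate S 1) := by
  refine ⟨⟨fun y hy => ?_, by simp⟩, fun a ha hsum => ?_⟩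
  · rw [List.eq_of_mem_replicate hy]
    exact ⟨le_rfl, hn⟩
  · rw [contnt_replicate_one, ← hsum]
    exact contnt_le_fib_sum_succ a fun y hy => (ha y hy).1

/-- Theorem 4: over `U_n(S)` (finite sequences with entries in
`{1,…,n}` and sum `S`) the maximal continuant is attained at the all-ones
sequence of length `S`, which itself belongs to `U_n(S)`. -/
theorem stmt_3 (n S : ℕ) (hn : 0 < n) (hS : 0 < S) :
    ((∀ y ∈ List.replicate S 1, 1 ≤ y ∧ y ≤ n) ∧ (List.replicate S 1).sum = S) ∧
    ∀ a : List ℕ, (∀ y ∈ a, 1 ≤ y ∧ y ≤ n) → a.sum = S →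
      contnt a ≤ contnt (List.replicate S 1) :=
  stmt_3_general n S hn
end

section
/- Let U = (u_1,…,u_α), V = (v_1,…,v_β), W = (w_1,…,w_γ) be finite sequences of positive integers with β ≥ 2 and v_1 ≠ v_β. Then the inequality ⟨u_1,…,u_α, v_1,…,v_β, w_1,…,w_γ⟩ ≤ ⟨u_1,…,u_α, v_β,…,v_1, w_1,…,w_γ⟩ holds if and only if ([0; u_α, u_{α−1},…,u_1] − [0; w_1, w_2,…,w_γ]) · ([0; v_β, v_{β−1},…,v_1] − [0; v_1, v_2,…,v_β]) ≥ 0. Moreover, equality of the two continuants holds if and only if [0; u_α,…,u_1] = [0; w_1,…,w_γ]. -/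
/-- The continued fraction `[0; a_1, …, a_t]` of a list (`0` for the empty list). -/
def cf0 : List ℕ → ℚ
  | [] => 0
  | a :: l => 1 / ((a : ℚ) + cf0 l)

open Matrix

/-- The entries of `contMatrix R [a₁, …, a_t]` are `⟨a₁…a_t⟩, ⟨a₁…a_{t-1}⟩` in the first row
and `⟨a₂…a_t⟩, ⟨a₂…a_{t-1}⟩` in the second, with `⟨a₂…a_{t-1}⟩ = 0` for `t = 1` and the identity matrix for `t = 0`. -/
def contMatrix (R : Type*) [Semiring R] (l : List ℕ) : Matrix (Fin 2) (Fin 2) R :=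
  (l.map fun a : ℕ => !![(a : R), 1; 1, 0]).prod

section Semiring

variable {R : Type*} [Semiring R]

@[simp]
theorem contMatrix_nil : contMatrix R [] = 1 := rfl

theorem contMatrix_cons (a : ℕ) (l : List ℕ) :
    contMatrix R (a :: l) = !![(a : R), 1; 1, 0] * contMatrix R l := rfl

theorem contMatrix_append (l l' : List ℕ) :
    contMatrix R (l ++ l') = contMatrix R l * contMatrix R l' := by
  simp [contMatrix]

@[simp]
theorem contMatrix_cons_zero (a : ℕ) (l : List ℕ) (j : Fin 2) :
    contMatrix R (a :: l) 0 j = a * contMatrix R l 0 j + contMatrix R l 1 j := by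
  simp [contMatrix_cons, mul_apply, Fin.sum_univ_two]

@[simp]
theorem contMatrix_cons_one (a : ℕ) (l : List ℕ) (j : Fin 2) :
    contMatrix R (a :: l) 1 j = contMatrix R l 0 j := by
  simp [contMatrix_cons, mul_apply, Fin.sum_univ_two]

theorem contMatrix_concat_zero (l : List ℕ) (a : ℕ) (i : Fin 2) :
    contMatrix R (l ++ [a]) i 0 = contMatrix R l i 0 * a + contMatrix R l i 1 := by
  simp [contMatrix_append, contMatrix_cons, mul_apply, Fin.sum_univ_two]

theorem contMatrix_concat_one (l : List ℕ) (a : ℕ) (i : Fin 2) :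
    contMatrix R (l ++ [a]) i 1 = contMatrix R l i 0 := by
  simp [contMatrix_append, contMatrix_cons, mul_apply, Fin.sum_univ_two]

theorem contMatrix_zero_zero (l : List ℕ) : contMatrix R l 0 0 = contnt l := by
  induction l using contnt.induct <;> simp_all [contnt]

theorem contnt_append_append (U V W : List ℕ) :
    (contnt (U ++ V ++ W) : R) = (contMatrix R U * contMatrix R V * contMatrix R W) 0 0 := by
  rw [← contMatrix_zero_zero, contMatrix_append, contMatrix_append]

theorem map_contMatrix {S : Type*} [Semiring S] (f : R →+* S) (l : List ℕ) :
    (contMatrix R l).map f = contMatrix S l := by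
  induction l with
  | nil => simp
  | cons a l ih =>
    rw [contMatrix_cons, contMatrix_cons, Matrix.map_mul, ih]
    congr 1
    ext i j
    fin_cases i <;> fin_cases j <;> simp

theorem contMatrix_natCast_apply (l : List ℕ) (i j : Fin 2) :
    (contMatrix ℕ l i j : R) = contMatrix R l i j := by
  rw [← map_contMatrix (Nat.castRingHom R)]
  rfl

end Semiring

theorem contMatrix_reverse {R : Type*} [CommSemiring R] (l : List ℕ) :
    contMatrix R l.reverse = (contMatrix R l)ᵀ := by
  induction l with
  | nil => simp
  | cons a l ih =>
    rw [List.reverse_cons, contMatrix_append, ih, contMatrix_cons a l, transpose_mul,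
      contMatrix_cons, contMatrix_nil, mul_one]
    congr 1
    ext i j
    fin_cases i <;> fin_cases j <;> simp

theorem contMatrix_zero_zero_pos {R : Type*} [Semiring R] [PartialOrder R] [IsStrictOrderedRing R]
    {l : List ℕ} (hl : ∀ a ∈ l, 1 ≤ a) : 0 < contMatrix R l 0 0 := by
  rw [← contMatrix_natCast_apply, Nat.cast_pos]
  induction l with
  | nil => simp
  | cons a l ih =>
    simp only [List.mem_cons, forall_eq_or_imp] at hl
    rw [contMatrix_cons_zero]
    nlinarith [ih hl.2]

section Positive

variable {l : List ℕ}

theorem contMatrix_one_zero_le (hl : ∀ a ∈ l, 1 ≤ a) :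
    contMatrix ℕ l 1 0 ≤ contMatrix ℕ l 0 0 := by
  cases l with
  | nil => simp
  | cons a l =>
    simp only [contMatrix_cons_zero, contMatrix_cons_one]
    nlinarith [hl a List.mem_cons_self]

theorem contMatrix_zero_one_le (hl : ∀ a ∈ l, 1 ≤ a) :
    contMatrix ℕ l 0 1 ≤ contMatrix ℕ l 0 0 := by
  simpa [contMatrix_reverse] using contMatrix_one_zero_le (l := l.reverse) (by simpa using hl)

theorem contMatrix_zero_one_lt (hl : ∀ a ∈ l, 1 ≤ a) :
    contMatrix ℕ l 0 1 < contMatrix ℕ l 0 0 + contMatrix ℕ l 1 0 := by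
  cases l with
  | nil => simp
  | cons a l =>
    have := contMatrix_zero_zero_pos (R := ℕ) fun b hb => hl b (List.mem_cons_of_mem a hb)
    rw [contMatrix_cons_one]
    linarith [contMatrix_zero_one_le hl]

theorem contMatrix_one_zero_lt (hl : ∀ a ∈ l, 1 ≤ a) :
    contMatrix ℕ l 1 0 < contMatrix ℕ l 0 0 + contMatrix ℕ l 0 1 := by
  simpa [contMatrix_reverse] using contMatrix_zero_one_lt (l := l.reverse) (by simpa using hl)

theorem contMatrix_zero_one_ne_one_zero {x y : ℕ} (hl : ∀ a ∈ l, 1 ≤ a) (hxy : x ≠ y) :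
    contMatrix ℕ (x :: l ++ [y]) 0 1 ≠ contMatrix ℕ (x :: l ++ [y]) 1 0 := by
  have h₁ := contMatrix_zero_one_lt hl
  have h₂ := contMatrix_one_zero_lt hl
  simp only [List.cons_append, contMatrix_cons_zero, contMatrix_cons_one, contMatrix_concat_zero,
    contMatrix_concat_one, Nat.cast_id]
  -- the entries are `x⟨l⟩ + ⟨l without its head⟩` and `y⟨l⟩ + ⟨l without its last⟩`
  rcases hxy.lt_or_gt with h | h <;> nlinarith

end Positive

theorem cf0_eq_div {l : List ℕ} (hl : ∀ a ∈ l, 1 ≤ a) :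
    cf0 l = contMatrix ℚ l 1 0 / contMatrix ℚ l 0 0 := by
  induction l with
  | nil => simp [cf0]
  | cons a l ih =>
    simp only [List.mem_cons, forall_eq_or_imp] at hl
    have : (0 : ℚ) < contMatrix ℚ l 0 0 := contMatrix_zero_zero_pos hl.2
    have : (0 : ℚ) ≤ contMatrix ℚ l 1 0 := by
      rw [← contMatrix_natCast_apply]
      positivity
    rw [cf0, ih hl.2, contMatrix_cons_zero, contMatrix_cons_one]
    field_simp

theorem cf0_reverse_eq_div {l : List ℕ} (hl : ∀ a ∈ l, 1 ≤ a) :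
    cf0 l.reverse = contMatrix ℚ l 0 1 / contMatrix ℚ l 0 0 := by
  simp [cf0_eq_div (l := l.reverse) (by simpa using hl), contMatrix_reverse]

namespace Matrix

variable {K : Type*}

theorem fin_two_mul_transpose_mul_apply_sub [CommRing K] (A B C : Matrix (Fin 2) (Fin 2) K) :
    (A * Bᵀ * C) 0 0 - (A * B * C) 0 0 = (A 0 1 * C 0 0 - A 0 0 * C 1 0) * (B 0 1 - B 1 0) := by
  simp only [mul_apply, transpose_apply, Fin.sum_univ_two]
  ring

variable [Field K] [LinearOrder K] [IsStrictOrderedRing K] {A B C : Matrix (Fin 2) (Fin 2) K}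

theorem fin_two_mul_mul_apply_le_mul_transpose_mul_apply_iff (hA : 0 < A 0 0) (hC : 0 < C 0 0)
    (hB : 0 < B 0 0) :
    (A * B * C) 0 0 ≤ (A * Bᵀ * C) 0 0 ↔
      0 ≤ (A 0 1 / A 0 0 - C 1 0 / C 0 0) * (B 0 1 / B 0 0 - B 1 0 / B 0 0) := by
  have : (A 0 1 / A 0 0 - C 1 0 / C 0 0) * (B 0 1 / B 0 0 - B 1 0 / B 0 0) =
      ((A * Bᵀ * C) 0 0 - (A * B * C) 0 0) / (A 0 0 * C 0 0 * B 0 0) := by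
    rw [fin_two_mul_transpose_mul_apply_sub]
    field_simp
  rw [this, le_div_iff₀ (by positivity), zero_mul, sub_nonneg]

theorem fin_two_mul_mul_apply_eq_mul_transpose_mul_apply_iff (hA : 0 < A 0 0) (hC : 0 < C 0 0)
    (hB : B 0 1 ≠ B 1 0) :
    (A * B * C) 0 0 = (A * Bᵀ * C) 0 0 ↔ A 0 1 / A 0 0 = C 1 0 / C 0 0 := by
  rw [eq_comm, ← sub_eq_zero, fin_two_mul_transpose_mul_apply_sub, mul_eq_zero,
    or_iff_left (sub_ne_zero.mpr hB), div_eq_div_iff hA.ne' hC.ne', sub_eq_zero, mul_comm (C 1 0)]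

end Matrix

/-- Lemma 1B: for `v_1 ≠ v_β`, the basic-substitution inequality
`⟨U,V,W⟩ ≤ ⟨U,←V,W⟩` holds iff
`([0;←U] − [0;W])·([0;←V] − [0;V]) ≥ 0`, and equality holds iff `[0;←U] = [0;W]`. -/
theorem stmt_8 (U V W : List ℕ)
    (hU : ∀ y ∈ U, 1 ≤ y) (hV : ∀ y ∈ V, 1 ≤ y) (hW : ∀ y ∈ W, 1 ≤ y)
    (hlen : 2 ≤ V.length) (hne : V.headI ≠ V.getLastD 0) :
    (contnt (U ++ V ++ W) ≤ contnt (U ++ V.reverse ++ W) ↔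
      0 ≤ (cf0 U.reverse - cf0 W) * (cf0 V.reverse - cf0 V)) ∧
    (contnt (U ++ V ++ W) = contnt (U ++ V.reverse ++ W) ↔
      cf0 U.reverse = cf0 W) := by
  have hB : contMatrix ℚ V 0 1 ≠ contMatrix ℚ V 1 0 := by
    obtain ⟨x, mid, y, rfl⟩ : ∃ x mid y, V = x :: mid ++ [y] := by
      match V, hlen with
      | x :: z :: l, _ =>
        exact ⟨x, (z :: l).dropLast, (z :: l).getLast (List.cons_ne_nil z l),
          by rw [List.cons_append, List.dropLast_append_getLast]⟩
    rw [List.getLastD_concat] at hne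
    rw [← contMatrix_natCast_apply (R := ℚ), ← contMatrix_natCast_apply (R := ℚ), Ne,
      Nat.cast_inj]
    exact contMatrix_zero_one_ne_one_zero (fun a ha => hV a (by simp [ha])) hne
  have hpos {l : List ℕ} (hl : ∀ a ∈ l, 1 ≤ a) : (0 : ℚ) < contMatrix ℚ l 0 0 :=
    contMatrix_zero_zero_pos hl
  rw [← Nat.cast_le (α := ℚ), ← Nat.cast_inj (R := ℚ), contnt_append_append,
    contnt_append_append, contMatrix_reverse, cf0_reverse_eq_div hU, cf0_eq_div hW,
    cf0_reverse_eq_div hV, cf0_eq_div hV]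
  exact ⟨fin_two_mul_mul_apply_le_mul_transpose_mul_apply_iff (hpos hU) (hpos hW) (hpos hV),
    fin_two_mul_mul_apply_eq_mul_transpose_mul_apply_iff (hpos hU) (hpos hW) hB⟩
end

section
/- Let n ≥ 1 and define K_{l,n} by K_{0,n} = 1, K_{1,n} = n+2, K_{j+1,n} = (n+2)·K_{j,n} − K_{j−1,n}. Then for every l ≥ 1: (i) the continuant of the alternating sequence 1,n,1,n,…,1 with 2l−1 elements equals K_{l−1,n}; (ii) the continuant of the alternating sequence n,1,n,1,…,n with 2l−1 elements equals n·K_{l−1,n}; (iii) the continuant of the alternating sequence 1,n,1,n,…,1,n with 2l elements equals K_{l,n} − K_{l−1,n}. -/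
/-- `K_{l,n}`: `K_{0,n} = 1`, `K_{1,n} = n+2`, `K_{j+1,n} = (n+2)K_{j,n} − K_{j−1,n}`. -/
def Kseq (n : ℕ) : ℕ → ℤ
  | 0 => 1
  | 1 => (n : ℤ) + 2
  | (j + 2) => ((n : ℤ) + 2) * Kseq n (j + 1) - Kseq n j

/-
Write `c(a, b, m)` for the continuant of the alternating list `a, b, a, b, …` of length `m`.
Peeling off the first entry gives `c(a, b, m + 2) = a · c(b, a, m + 1) + c(a, b, m)`, and a joint
induction shows `c(a, b, 2k + 1) = a · K_k` and `c(a, b, 2k + 2) = K_{k+1} − K_k` with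
`K = K_{·, ab}`: the even case closes up exactly because of the recurrence
`K_{k+2} = (ab + 2) K_{k+1} − K_k`. The theorem is the case `{a, b} = {1, n}`.
-/

def altList (a b : ℕ) : ℕ → List ℕ
  | 0 => []
  | m + 1 => a :: altList b a m

theorem range_map_ite_mod_two_eq_altList (m : ℕ) :
    ∀ a b : ℕ, ((List.range m).map fun i => if i % 2 = 0 then a else b) = altList a b m := by
  induction m with
  | zero => intro a b; rfl
  | succ m ih =>
    intro a b
    have hswap : ((fun i => if i % 2 = 0 then a else b) ∘ (· + 1)) =
        fun i => if i % 2 = 0 then b else a := by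
      funext i
      rcases Nat.mod_two_eq_zero_or_one i with h | h <;> simp [h, Nat.succ_mod_two_eq_zero_iff]
    rw [List.range_succ_eq_map, List.map_cons, List.map_map, hswap, ih]
    rfl

theorem Kseq_add_two (n k : ℕ) :
    Kseq n (k + 2) = ((n : ℤ) + 2) * Kseq n (k + 1) - Kseq n k := rfl

theorem contnt_altList_add_two (a b m : ℕ) :
    (contnt (altList a b (m + 2)) : ℤ) =
      a * contnt (altList b a (m + 1)) + contnt (altList a b m) := by
  simp only [altList, contnt, Nat.cast_add, Nat.cast_mul]

theorem contnt_altList_odd_and_even (k : ℕ) : ∀ a b : ℕ,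
    (contnt (altList a b (2 * k + 1)) : ℤ) = a * Kseq (a * b) k ∧
    (contnt (altList a b (2 * k + 2)) : ℤ) = Kseq (a * b) (k + 1) - Kseq (a * b) k := by
  induction k with
  | zero =>
    intro a b
    simp only [altList, contnt, Kseq]
    push_cast
    constructor <;> ring
  | succ k ih =>
    intro a b
    have hodd : ∀ a b : ℕ,
        (contnt (altList a b (2 * (k + 1) + 1)) : ℤ) = a * Kseq (a * b) (k + 1) := by
      intro a b
      rw [show 2 * (k + 1) + 1 = 2 * k + 1 + 2 by ring, contnt_altList_add_two,
        (ih b a).2, (ih a b).1, mul_comm b a]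
      ring
    refine ⟨hodd a b, ?_⟩
    rw [show 2 * (k + 1) + 2 = 2 * k + 2 + 2 by ring, contnt_altList_add_two,
      show 2 * k + 2 + 1 = 2 * (k + 1) + 1 by ring, hodd b a, (ih a b).2, mul_comm b a,
      Kseq_add_two]
    push_cast
    ring

theorem contnt_altList_odd (a b k : ℕ) :
    (contnt (altList a b (2 * k + 1)) : ℤ) = a * Kseq (a * b) k :=
  (contnt_altList_odd_and_even k a b).1

theorem contnt_altList_even (a b k : ℕ) :
    (contnt (altList a b (2 * k + 2)) : ℤ) = Kseq (a * b) (k + 1) - Kseq (a * b) k :=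
  (contnt_altList_odd_and_even k a b).2

theorem stmt_10_general (n : ℕ) (l : ℕ) (hl : 1 ≤ l) :
    (contnt ((List.range (2 * l - 1)).map fun i => if i % 2 = 0 then 1 else n) : ℤ) =
        Kseq n (l - 1) ∧
    (contnt ((List.range (2 * l - 1)).map fun i => if i % 2 = 0 then n else 1) : ℤ) =
        n * Kseq n (l - 1) ∧
    (contnt ((List.range (2 * l)).map fun i => if i % 2 = 0 then 1 else n) : ℤ) =
        Kseq n l - Kseq n (l - 1) := by
  obtain ⟨k, rfl⟩ : ∃ k, l = k + 1 := ⟨l - 1, by omega⟩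
  rw [show 2 * (k + 1) - 1 = 2 * k + 1 by omega, show 2 * (k + 1) = 2 * k + 2 by ring,
    Nat.add_sub_cancel]
  simp only [range_map_ite_mod_two_eq_altList]
  refine ⟨?_, ?_, ?_⟩
  · simpa using contnt_altList_odd 1 n k
  · simpa using contnt_altList_odd n 1 k
  · simpa using contnt_altList_even 1 n k

/-- Lemma 6: continuants of the alternating sequences
`1,n,1,…,1` (`2l−1` elements), `n,1,n,…,n` (`2l−1` elements) and
`1,n,…,1,n` (`2l` elements) equal `K_{l−1,n}`, `n·K_{l−1,n}` and
`K_{l,n} − K_{l−1,n}` respectively. -/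
theorem stmt_10 (n : ℕ) (hn : 1 ≤ n) (l : ℕ) (hl : 1 ≤ l) :
    (contnt ((List.range (2 * l - 1)).map fun i => if i % 2 = 0 then 1 else n) : ℤ) =
        Kseq n (l - 1) ∧
    (contnt ((List.range (2 * l - 1)).map fun i => if i % 2 = 0 then n else 1) : ℤ) =
        n * Kseq n (l - 1) ∧
    (contnt ((List.range (2 * l)).map fun i => if i % 2 = 0 then 1 else n) : ℤ) =
        Kseq n l - Kseq n (l - 1) :=
  stmt_10_general n l hl
end

section
/- For n > 8, with λ_n = (n + √(n²+4))/2 and μ_n = (n + 2 + √(n²+4n))/2, one has (1 + 1/λ_n²)/(1 − 1/μ_n²) · (μ_n/λ_n)^n < (41/40)·e². -/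
/-!
Since `λ_n > n` and `n + 1 < μ_n < n + 2`, the ratio `μ_n / λ_n` is below `1 + 2 / n`, so
`(μ_n / λ_n)^n < (1 + 2 / n)^n < e²`, while for `n ≥ 9` the prefactor is at most
`(1 + 1/81) / (1 - 1/100) < 41/40`.
-/

open Real

lemma lt_add_sqrt_sq_add_four_div_two (x : ℝ) : x < (x + √(x ^ 2 + 4)) / 2 := by
  have : |x| < √(x ^ 2 + 4) := by
    rw [← sqrt_sq_eq_abs]
    exact sqrt_lt_sqrt (sq_nonneg x) (by linarith)
  linarith [le_abs_self x]

lemma add_one_lt_add_two_add_sqrt_div_two {x : ℝ} (hx : 0 < x) :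
    x + 1 < (x + 2 + √(x ^ 2 + 4 * x)) / 2 := by
  have : x < √(x ^ 2 + 4 * x) := lt_sqrt_of_sq_lt (by linarith)
  linarith

lemma add_two_add_sqrt_div_two_lt {x : ℝ} (hx : -2 < x) :
    (x + 2 + √(x ^ 2 + 4 * x)) / 2 < x + 2 := by
  have : √(x ^ 2 + 4 * x) < x + 2 :=
    (sqrt_lt' (by linarith)).2 (by nlinarith)
  linarith

lemma one_add_div_pow_lt_exp {n : ℕ} (hn : n ≠ 0) {t : ℝ} (ht : 0 < t) :
    (1 + t / n) ^ n < exp t := by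
  have hn' : (0 : ℝ) < n := by positivity
  calc (1 + t / n) ^ n < exp (t / n) ^ n :=
        pow_lt_pow_left₀ (by linarith [add_one_lt_exp (x := t / n) (by positivity)])
          (by positivity) hn
    _ = exp t := by rw [← exp_nat_mul, mul_div_cancel₀ t hn'.ne']

lemma one_add_inv_sq_div_one_sub_inv_sq_lt {a b : ℝ} (ha : 9 ≤ a) (hb : 10 ≤ b) :
    (1 + 1 / a ^ 2) / (1 - 1 / b ^ 2) < 41 / 40 := by
  have hinv_a : 1 / a ^ 2 ≤ 1 / 81 := one_div_le_one_div_of_le (by norm_num) (by nlinarith)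
  have hinv_b : 1 / b ^ 2 ≤ 1 / 100 := one_div_le_one_div_of_le (by norm_num) (by nlinarith)
  rw [div_lt_iff₀ (by linarith)]
  linarith [show 0 < 1 / a ^ 2 by positivity]

/-- Lemma 8: for `n > 8`, with `λ_n = (n+√(n²+4))/2` and
`μ_n = (n+2+√(n²+4n))/2`, one has
`(1 + 1/λ_n²)/(1 − 1/μ_n²)·(μ_n/λ_n)^n < (41/40)e²`. -/
theorem stmt_13 (n : ℕ) (hn : 8 < n) :
    let lam : ℝ := ((n : ℝ) + Real.sqrt ((n : ℝ) ^ 2 + 4)) / 2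
    let mu : ℝ := ((n : ℝ) + 2 + Real.sqrt ((n : ℝ) ^ 2 + 4 * n)) / 2
    (1 + 1 / lam ^ 2) / (1 - 1 / mu ^ 2) * (mu / lam) ^ n < 41 / 40 * Real.exp 2 := by
  intro lam mu
  have hn9 : (9 : ℝ) ≤ n := by exact_mod_cast hn
  have hlam : (n : ℝ) < lam := lt_add_sqrt_sq_add_four_div_two n
  have hmu_lower : (n : ℝ) + 1 < mu := add_one_lt_add_two_add_sqrt_div_two (by linarith)
  have hmu_upper : mu < n + 2 := add_two_add_sqrt_div_two_lt (by linarith)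
  have hratio : mu / lam < 1 + 2 / n := by
    rw [div_lt_iff₀ (by linarith), one_add_div (by positivity), div_mul_eq_mul_div,
      lt_div_iff₀ (by positivity)]
    nlinarith
  have hpow : (mu / lam) ^ n < exp 2 :=
    (pow_le_pow_left₀ (by positivity) hratio.le n).trans_lt
      (one_add_div_pow_lt_exp (by omega) two_pos)
  have hmu_sq : 1 / mu ^ 2 < 1 := (div_lt_one (by positivity)).2 (by nlinarith)
  exact mul_lt_mul'' (one_add_inv_sq_div_one_sub_inv_sq_lt (by linarith) (by linarith)) hpow
    (div_nonneg (by positivity) (sub_nonneg.2 hmu_sq.le)) (by positivity)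
end

section
/- Let x_1,…,x_i (i ≥ 1) and y_1,…,y_k (k ≥ 1) and z_1,…,z_j (j ≥ 0) be positive integers. If ⟨y_1,…,y_k⟩ ≤ ⟨x_1,…,x_i⟩ and ⟨y_1,…,y_{k−1}⟩ ≤ ⟨x_1,…,x_{i−1}⟩, then ⟨y_1,…,y_k, z_1,…,z_j⟩ ≤ ⟨x_1,…,x_i, z_1,…,z_j⟩. Moreover, the conclusion holds with strict inequality if either both hypotheses are strict inequalities, or the first hypothesis is a strict inequality and j ≥ 1. -/
theorem contnt_pos {l : List ℕ} (h : ∀ a ∈ l, 0 < a) : 0 < contnt l := by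
  induction l using contnt.induct with
  | case1 => simp [contnt]
  | case2 a => simpa [contnt] using h a (by simp)
  | case3 a b l ih _ =>
    have ha : 0 < a := h a (by simp)
    have hbl : 0 < contnt (b :: l) := ih fun c hc => h c (List.mem_cons_of_mem a hc)
    simp only [contnt]
    positivity

theorem contnt_cons_cons_dropLast (a b : ℕ) {l : List ℕ} (hl : l ≠ []) :
    contnt (a :: b :: l).dropLast = a * contnt (b :: l).dropLast + contnt l.dropLast := by
  obtain ⟨c, l, rfl⟩ := List.exists_cons_of_ne_nil hl
  rcases l with _ | ⟨d, l⟩ <;> rfl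

theorem contnt_append {w z : List ℕ} (hw : w ≠ []) (hz : z ≠ []) :
    contnt (w ++ z) = contnt w * contnt z + contnt w.dropLast * contnt z.tail := by
  obtain ⟨c, z, rfl⟩ := List.exists_cons_of_ne_nil hz
  induction w using contnt.induct with
  | case1 => exact absurd rfl hw
  | case2 a => rcases z with _ | ⟨d, z⟩ <;> simp [contnt]
  | case3 a b l ih ih' =>
    rcases eq_or_ne l [] with rfl | hl
    · rcases z with _ | ⟨d, z⟩ <;> simp [contnt] <;> ring
    · have hsplit : contnt (a :: b :: l ++ c :: z)
          = a * contnt (b :: l ++ c :: z) + contnt (l ++ c :: z) := by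
        obtain ⟨d, l, rfl⟩ := List.exists_cons_of_ne_nil hl
        rfl
      rw [hsplit, ih (List.cons_ne_nil b l), ih' hl, contnt_cons_cons_dropLast a b hl, contnt]
      ring

theorem stmt_14_general (x y z : List ℕ) (hxne : x ≠ []) (hyne : y ≠ [])
    (hz : ∀ a ∈ z, 1 ≤ a)
    (h1 : contnt y ≤ contnt x) (h2 : contnt y.dropLast ≤ contnt x.dropLast) :
    contnt (y ++ z) ≤ contnt (x ++ z) ∧
    (contnt y < contnt x → contnt y.dropLast < contnt x.dropLast →
      contnt (y ++ z) < contnt (x ++ z)) ∧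
    (contnt y < contnt x → z ≠ [] → contnt (y ++ z) < contnt (x ++ z)) := by
  rcases eq_or_ne z [] with rfl | hzne
  · simp only [List.append_nil]
    exact ⟨h1, fun hlt _ => hlt, fun _ h => absurd rfl h⟩
  have hzpos : 0 < contnt z := contnt_pos hz
  have hlt : contnt y < contnt x → contnt (y ++ z) < contnt (x ++ z) := fun hlt => by
    rw [contnt_append hxne hzne, contnt_append hyne hzne]
    exact add_lt_add_of_lt_of_le (by gcongr) (by gcongr)
  refine ⟨?_, fun h _ => hlt h, fun h _ => hlt h⟩
  rw [contnt_append hxne hzne, contnt_append hyne hzne]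
  gcongr

/-- Lemmas 11/12, majorization: if `⟨y⟩ ≤ ⟨x⟩` and
`⟨y₁,…,y_{k−1}⟩ ≤ ⟨x₁,…,x_{i−1}⟩` then `⟨y,z⟩ ≤ ⟨x,z⟩`; the conclusion is strict
if both hypotheses are strict, or if the first is strict and `z` is nonempty. -/
theorem stmt_14 (x y z : List ℕ) (hxne : x ≠ []) (hyne : y ≠ [])
    (hx : ∀ a ∈ x, 1 ≤ a) (hy : ∀ a ∈ y, 1 ≤ a) (hz : ∀ a ∈ z, 1 ≤ a)
    (h1 : contnt y ≤ contnt x) (h2 : contnt y.dropLast ≤ contnt x.dropLast) :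
    contnt (y ++ z) ≤ contnt (x ++ z) ∧
    (contnt y < contnt x → contnt y.dropLast < contnt x.dropLast →
      contnt (y ++ z) < contnt (x ++ z)) ∧
    (contnt y < contnt x → z ≠ [] → contnt (y ++ z) < contnt (x ++ z)) :=
  stmt_14_general x y z hxne hyne hz h1 h2
end

section
/- Let n ≥ 2 and let S, t be integers with 2 ≤ t ≤ S < nt. Then exactly one of the following two systems has a solution in integers m, x, z: (I) m(n+1) + nx + z = S, 2m + x + 1 = t, m ≥ 0, x ≥ 0, 1 ≤ z ≤ n−1; (II) m(n+1) − x + z = S, 2m − x + 1 = t, m ≥ 0, x < 0, 1 ≤ z ≤ n−1. This solution is unique and is given by: z is the unique integer with 1 ≤ z ≤ n−1 and z ≡ S − t + 1 (mod n−1), x = 2(S − t + 1 − z)/(n−1) + 1 − t, and m = (t − |x| − 1)/2. -/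
/-!
Subtracting the second equation from the first, system (I) becomes
`(z - 1) + (n - 1)(m + x) = S - t` and system (II) becomes `(z - 1) + (n - 1) m = S - t`.
Since `0 ≤ z - 1 < n - 1`, both are Euclidean divisions of `S - t` by `n - 1`: with quotient `k`,
every solution has `z - 1 = (S - t) % (n - 1)` and `x = 2k + 1 - t`, and then `m = t - 1 - k`
in (I), `m = k` in (II), i.e. `m = (t - |x| - 1) / 2` in both. The sign of `x` decides which
system is solvable, and `0 ≤ k < t` (from `t ≤ S < nt`) makes `m ≥ 0`.
-/

namespace Int

theorem add_mul_eq_add_mul_iff_of_lt {d q r q' r' : ℤ} (hr' : 0 ≤ r') (hr'd : r' < d) :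
    r + d * q = r' + d * q' ∧ 0 ≤ r ∧ r < d ↔ r = r' ∧ q = q' := by
  have hd : 0 < d := by omega
  have h := (Int.ediv_emod_unique (q := q') hd).mpr ⟨rfl, hr', hr'd⟩
  constructor
  · rintro ⟨he, hr₀, hrd⟩
    obtain ⟨hq, hr⟩ := (Int.ediv_emod_unique (a := r' + d * q') (q := q) hd).mpr ⟨he, hr₀, hrd⟩
    exact ⟨hr.symm.trans h.2, hq.symm.trans h.1⟩
  · rintro ⟨rfl, rfl⟩
    exact ⟨rfl, hr', hr'd⟩

end Int

section Systems

variable {n S t k r m x z : ℤ}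

theorem first_system_iff (hr : 0 ≤ r) (hrn : r < n - 1) (hdiv : r + (n - 1) * k = S - t)
    (hkt : k < t) :
    (m * (n + 1) + n * x + z = S ∧ 2 * m + x + 1 = t ∧ 0 ≤ m ∧ 0 ≤ x ∧ 1 ≤ z ∧ z ≤ n - 1) ↔
      (m, x, z) = ((t - |2 * k + 1 - t| - 1) / 2, 2 * k + 1 - t, r + 1) ∧ 0 ≤ 2 * k + 1 - t := by
  constructor
  · rintro ⟨h₁, h₂, hm, hx, hz₁, hz₂⟩
    obtain ⟨hz, hmx⟩ :=
      (Int.add_mul_eq_add_mul_iff_of_lt (r := z - 1) (q := m + x) (q' := k) hr hrn).mp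
        ⟨by linear_combination h₁ - h₂ - hdiv, by omega, by omega⟩
    have hX : 0 ≤ 2 * k + 1 - t := by omega
    rw [abs_of_nonneg hX, Prod.mk.injEq, Prod.mk.injEq]
    omega
  · rintro ⟨h, hX⟩
    rw [abs_of_nonneg hX, Prod.mk.injEq, Prod.mk.injEq] at h
    obtain ⟨hm, rfl, rfl⟩ := h
    obtain rfl : m = t - 1 - k := by omega
    exact ⟨by linear_combination hdiv, by ring, by omega, hX, by omega, by omega⟩

theorem second_system_iff (hr : 0 ≤ r) (hrn : r < n - 1) (hdiv : r + (n - 1) * k = S - t)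
    (hk : 0 ≤ k) :
    (m * (n + 1) - x + z = S ∧ 2 * m - x + 1 = t ∧ 0 ≤ m ∧ x < 0 ∧ 1 ≤ z ∧ z ≤ n - 1) ↔
      (m, x, z) = ((t - |2 * k + 1 - t| - 1) / 2, 2 * k + 1 - t, r + 1) ∧ 2 * k + 1 - t < 0 := by
  constructor
  · rintro ⟨h₁, h₂, hm, hx, hz₁, hz₂⟩
    obtain ⟨hz, hmk⟩ :=
      (Int.add_mul_eq_add_mul_iff_of_lt (r := z - 1) (q := m) (q' := k) hr hrn).mp
        ⟨by linear_combination h₁ - h₂ - hdiv, by omega, by omega⟩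
    have hX : 2 * k + 1 - t < 0 := by omega
    rw [abs_of_neg hX, Prod.mk.injEq, Prod.mk.injEq]
    omega
  · rintro ⟨h, hX⟩
    rw [abs_of_neg hX, Prod.mk.injEq, Prod.mk.injEq] at h
    obtain ⟨hm, rfl, rfl⟩ := h
    obtain rfl : m = k := by omega
    exact ⟨by linear_combination hdiv, by ring, hk, hX, by omega, by omega⟩

end Systems

theorem stmt_19_general (n S t : ℤ) (hn : 2 ≤ n) (htS : t ≤ S) (hSnt : S < n * t) :
    let z₀ : ℤ := (S - t) % (n - 1) + 1
    let x₀ : ℤ := 2 * (S - t + 1 - z₀) / (n - 1) + 1 - t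
    let m₀ : ℤ := (t - |x₀| - 1) / 2
    let Sys1 : ℤ × ℤ × ℤ → Prop := fun q =>
      q.1 * (n + 1) + n * q.2.1 + q.2.2 = S ∧ 2 * q.1 + q.2.1 + 1 = t ∧
      0 ≤ q.1 ∧ 0 ≤ q.2.1 ∧ 1 ≤ q.2.2 ∧ q.2.2 ≤ n - 1
    let Sys2 : ℤ × ℤ × ℤ → Prop := fun q =>
      q.1 * (n + 1) - q.2.1 + q.2.2 = S ∧ 2 * q.1 - q.2.1 + 1 = t ∧
      0 ≤ q.1 ∧ q.2.1 < 0 ∧ 1 ≤ q.2.2 ∧ q.2.2 ≤ n - 1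
    Xor' (∃ q, Sys1 q) (∃ q, Sys2 q) ∧
    (Sys1 (m₀, x₀, z₀) ∨ Sys2 (m₀, x₀, z₀)) ∧
    (1 ≤ z₀ ∧ z₀ ≤ n - 1 ∧ z₀ ≡ S - t + 1 [ZMOD n - 1]) ∧
    ∀ q : ℤ × ℤ × ℤ, Sys1 q ∨ Sys2 q → q = (m₀, x₀, z₀) := by
  intro z₀ x₀ m₀ Sys1 Sys2
  have hn₁ : 0 < n - 1 := by omega
  set k := (S - t) / (n - 1)
  set r := (S - t) % (n - 1)
  have hdiv : r + (n - 1) * k = S - t := Int.emod_add_mul_ediv _ _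
  have hr : 0 ≤ r := Int.emod_nonneg _ hn₁.ne'
  have hrn : r < n - 1 := Int.emod_lt_of_pos _ hn₁
  have hk : 0 ≤ k := Int.ediv_nonneg (by omega) hn₁.le
  have hkt : k < t := Int.ediv_lt_of_lt_mul hn₁ (by linarith)
  have hx₀ : x₀ = 2 * k + 1 - t := by
    have hz₀ : z₀ = r + 1 := rfl
    have : 2 * (S - t + 1 - z₀) = (n - 1) * (2 * k) := by rw [hz₀]; linear_combination -2 * hdiv
    simp only [x₀, this, Int.mul_ediv_cancel_left _ hn₁.ne']
  have hm₀ : m₀ = (t - |2 * k + 1 - t| - 1) / 2 := by simp only [m₀, hx₀]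
  have h₁ (q) : Sys1 q ↔ q = (m₀, x₀, z₀) ∧ 0 ≤ x₀ := by
    rw [hm₀, hx₀]; exact first_system_iff hr hrn hdiv hkt
  have h₂ (q) : Sys2 q ↔ q = (m₀, x₀, z₀) ∧ x₀ < 0 := by
    rw [hm₀, hx₀]; exact second_system_iff hr hrn hdiv hk
  have hz₀ : 1 ≤ z₀ ∧ z₀ ≤ n - 1 ∧ z₀ ≡ S - t + 1 [ZMOD n - 1] :=
    ⟨by omega, by omega, (Int.mod_modEq _ _).add_right 1⟩
  simp only [h₁, h₂, exists_eq_left, true_and]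
  exact ⟨xor_iff_iff_not.mpr not_lt.symm, le_or_gt 0 x₀, hz₀,
    fun q hq => hq.elim And.left And.left⟩

/-- Lemma 19: for `2 ≤ n`, `2 ≤ t ≤ S < nt`, exactly one of the
systems (I) `m(n+1)+nx+z=S, 2m+x+1=t, m≥0, x≥0, 1≤z≤n−1` and
(II) `m(n+1)−x+z=S, 2m−x+1=t, m≥0, x<0, 1≤z≤n−1` has an integer solution
`(m,x,z)`; the solution is unique and given by `z ≡ S−t+1 (mod n−1)`,
`1 ≤ z ≤ n−1`, `x = 2(S−t+1−z)/(n−1)+1−t`, `m = (t−|x|−1)/2`. -/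
theorem stmt_19 (n S t : ℤ) (hn : 2 ≤ n) (ht : 2 ≤ t) (htS : t ≤ S) (hSnt : S < n * t) :
    let z₀ : ℤ := (S - t) % (n - 1) + 1
    let x₀ : ℤ := 2 * (S - t + 1 - z₀) / (n - 1) + 1 - t
    let m₀ : ℤ := (t - |x₀| - 1) / 2
    let Sys1 : ℤ × ℤ × ℤ → Prop := fun q =>
      q.1 * (n + 1) + n * q.2.1 + q.2.2 = S ∧ 2 * q.1 + q.2.1 + 1 = t ∧
      0 ≤ q.1 ∧ 0 ≤ q.2.1 ∧ 1 ≤ q.2.2 ∧ q.2.2 ≤ n - 1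
    let Sys2 : ℤ × ℤ × ℤ → Prop := fun q =>
      q.1 * (n + 1) - q.2.1 + q.2.2 = S ∧ 2 * q.1 - q.2.1 + 1 = t ∧
      0 ≤ q.1 ∧ q.2.1 < 0 ∧ 1 ≤ q.2.2 ∧ q.2.2 ≤ n - 1
    Xor' (∃ q, Sys1 q) (∃ q, Sys2 q) ∧
    (Sys1 (m₀, x₀, z₀) ∨ Sys2 (m₀, x₀, z₀)) ∧
    (1 ≤ z₀ ∧ z₀ ≤ n - 1 ∧ z₀ ≡ S - t + 1 [ZMOD n - 1]) ∧
    ∀ q : ℤ × ℤ × ℤ, Sys1 q ∨ Sys2 q → q = (m₀, x₀, z₀) :=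
  stmt_19_general n S t hn htS hSnt
end
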